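/- arXiv:quant-ph/0612054 — 3 statements merged into one kernel-verified Lean document; each statement's English description precedes it below -/
import Mathlib

section
/- With the notation of the previous construction, if 𝓜 is a nontrivial proper closed subspace, a ∈ [0,1], and ν is chosen with ∫ |x| dν = ∞, then for every φ ∈ 𝓜 and every k ≥ 1, the function x ↦ xᵏ is integrable with respect to the complex measure B ↦ ⟨ψ, E^ν(B)φ⟩ for all ψ ∈ H, and ∫ xᵏ d⟨ψ, E^ν(·)φ⟩ = a⟨ψ, φ⟩. Hence E^ν[k] restricted to 𝓜 equals a·I|_𝓜 for all k ≥ 1, independently of ν. -/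
open MeasureTheory ContinuousLinearMap

noncomputable section

/-- A normalized positive operator measure (POM): positive operator valued,
normalized, and countably additive in the weak operator topology. -/
structure POM (Ω : Type*) [MeasurableSpace Ω] (H : Type*) [NormedAddCommGroup H]
    [InnerProductSpace ℂ H] [CompleteSpace H] where
  toFun : Set Ω → H →L[ℂ] H
  pos : ∀ s : Set Ω, (toFun s).IsPositive
  normalized : toFun Set.univ = 1
  weakly_additive : ∀ f : ℕ → Set Ω, (∀ n, MeasurableSet (f n)) →
    Pairwise (Function.onFun Disjoint f) →
    ∀ ψ φ : H, HasSum (fun n => (inner ℂ ψ (toFun (f n) φ) : ℂ))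
      (inner ℂ ψ (toFun (⋃ n, f n) φ))

open scoped ENNReal

section TwoPointMeasure

variable {α E : Type*} [MeasurableSpace α] [MeasurableSingletonClass α]
  [NormedAddCommGroup E] {c d : ℝ≥0∞}

theorem integrable_smul_dirac_add_smul_dirac (f : α → E) (hc : c ≠ ∞) (hd : d ≠ ∞)
    (x y : α) : Integrable f (c • Measure.dirac x + d • Measure.dirac y) :=
  ((integrable_dirac enorm_lt_top).smul_measure hc).add_measure
    ((integrable_dirac enorm_lt_top).smul_measure hd)

theorem integral_smul_dirac_add_smul_dirac [NormedSpace ℝ E] [CompleteSpace E] (f : α → E) (hc : c ≠ ∞)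
    (hd : d ≠ ∞) (x y : α) :
    ∫ z, f z ∂(c • Measure.dirac x + d • Measure.dirac y) = c.toReal • f x + d.toReal • f y := by
  rw [integral_add_measure ((integrable_dirac enorm_lt_top).smul_measure hc)
      ((integrable_dirac enorm_lt_top).smul_measure hd),
    integral_smul_measure, integral_smul_measure, integral_dirac, integral_dirac]

end TwoPointMeasure

theorem integral_pow_bernoulli {a : ℝ} (ha0 : 0 ≤ a) (ha1 : a ≤ 1) {k : ℕ} (hk : k ≠ 0) :
    ∫ x, x ^ k ∂(ENNReal.ofReal (1 - a) • Measure.dirac (0 : ℝ) +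
      ENNReal.ofReal a • Measure.dirac (1 : ℝ)) = a := by
  rw [integral_smul_dirac_add_smul_dirac _ ENNReal.ofReal_ne_top ENNReal.ofReal_ne_top,
    ENNReal.toReal_ofReal (sub_nonneg.mpr ha1), ENNReal.toReal_ofReal ha0]
  simp [zero_pow hk]

theorem inner_smul_add_smul_one_sub_apply_of_apply_eq {𝕜 H : Type*} [RCLike 𝕜]
    [NormedAddCommGroup H] [InnerProductSpace 𝕜 H] {P : H →L[𝕜] H} {φ : H} (hφ : P φ = φ)
    (c d : 𝕜) (ψ : H) : inner 𝕜 ψ ((c • P + d • (1 - P)) φ) = c * inner 𝕜 ψ φ := by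
  simp [hφ, inner_smul_right]

theorem statement6_general {H : Type*} [NormedAddCommGroup H] [InnerProductSpace ℂ H]
    [CompleteSpace H] (P : H →L[ℂ] H)
    (a : ℝ) (ha0 : 0 ≤ a) (ha1 : a ≤ 1)
    (μ : Measure ℝ)
    (hμ : μ = ENNReal.ofReal (1 - a) • Measure.dirac (0 : ℝ) +
              ENNReal.ofReal a • Measure.dirac (1 : ℝ))
    (ν : Measure ℝ)
    (E : POM ℝ H)
    (hE : ∀ B : Set ℝ,
      E.toFun B = ((μ B).toReal : ℂ) • P + ((ν B).toReal : ℂ) • ((1 : H →L[ℂ] H) - P)) :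
    ∀ k : ℕ, 1 ≤ k →
      Integrable (fun x : ℝ => x ^ k) μ ∧
      (∫ x, x ^ k ∂μ) = a ∧
      ∀ φ : H, P φ = φ → ∀ ψ : H,
        (∀ B : Set ℝ, (inner ℂ ψ (E.toFun B φ) : ℂ) = ((μ B).toReal : ℂ) * inner ℂ ψ φ) ∧
        ((∫ x, x ^ k ∂μ : ℝ) : ℂ) * inner ℂ ψ φ = (a : ℂ) * inner ℂ ψ φ := by
  intro k hk
  have hmoment : ∫ x, x ^ k ∂μ = a := hμ ▸ integral_pow_bernoulli ha0 ha1 (by omega)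
  refine ⟨hμ ▸ integrable_smul_dirac_add_smul_dirac _ ENNReal.ofReal_ne_top
    ENNReal.ofReal_ne_top _ _, hmoment, fun φ hφ ψ => ⟨fun B => ?_, by rw [hmoment]⟩⟩
  rw [hE B, inner_smul_add_smul_one_sub_apply_of_apply_eq hφ]

/-- With $E^ν(B) = μ(B)P + ν(B)(I-P)$, $μ = (1-a)δ₀ + aδ₁$, $P$ a nontrivial
proper projection and $∫|x|dν = ∞$: for every $φ$ in the range of $P$ and every $k ≥ 1$,
the complex measure $B ↦ ⟨ψ, E^ν(B)φ⟩$ equals $⟨ψ,φ⟩μ$, the function $x^k$ is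
$μ$-integrable with $∫ x^k dμ = a$, and hence
$∫ x^k d⟨ψ, E^ν(·)φ⟩ = a⟨ψ,φ⟩$: the moment operators restricted to the range of $P$
are $a·I$, independently of $ν$. -/
theorem statement6 {H : Type*} [NormedAddCommGroup H] [InnerProductSpace ℂ H]
    [CompleteSpace H] (P : H →L[ℂ] H) (hP : IsSelfAdjoint P) (hP2 : IsIdempotentElem P)
    (hP0 : P ≠ 0) (hP1 : P ≠ 1)
    (a : ℝ) (ha0 : 0 ≤ a) (ha1 : a ≤ 1)
    (μ : Measure ℝ)
    (hμ : μ = ENNReal.ofReal (1 - a) • Measure.dirac (0 : ℝ) +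
              ENNReal.ofReal a • Measure.dirac (1 : ℝ))
    (ν : Measure ℝ) [IsProbabilityMeasure ν]
    (hν : ¬ Integrable (fun x : ℝ => |x|) ν)
    (E : POM ℝ H)
    (hE : ∀ B : Set ℝ,
      E.toFun B = ((μ B).toReal : ℂ) • P + ((ν B).toReal : ℂ) • ((1 : H →L[ℂ] H) - P)) :
    ∀ k : ℕ, 1 ≤ k →
      Integrable (fun x : ℝ => x ^ k) μ ∧
      (∫ x, x ^ k ∂μ) = a ∧
      ∀ φ : H, P φ = φ → ∀ ψ : H,
        (∀ B : Set ℝ, (inner ℂ ψ (E.toFun B φ) : ℂ) = ((μ B).toReal : ℂ) * inner ℂ ψ φ) ∧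
        ((∫ x, x ^ k ∂μ : ℝ) : ℂ) * inner ℂ ψ φ = (a : ℂ) * inner ℂ ψ φ :=
  statement6_general P a ha0 ha1 μ hμ ν E hE
end
end

section
/- Let φ ∈ 𝒮(ℝ) and let f^W_φ be its Wigner function. Then for every Borel set B ⊆ ℝ, ∫_B ∫_ℝ f^W_φ(q,p) dq dp = ∫_B |(Fφ)(p)|² dp, where F is the Fourier–Plancherel transform. Hence the Weyl quantization of χ_{ℝ×B} is the spectral projection E^P(B) of momentum. -/
/-! Substituting `u = q + y/2`, `v = q - y/2`, a measure-preserving change of variables of `ℝ²`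
(a composition of two shears and a swap), the phase `e^{ipy}` factors as `e^{ipu} · conj e^{ipv}`,
so Fubini turns the `q`-integral of the Wigner function into `(2π)⁻¹ |∫ e^{ipx} φ x dx|²`
for every `p`; integrating over `B` is then immediate. -/

open MeasureTheory

section
open Complex

theorem measurePreserving_add_half_sub_half :
    MeasurePreserving (fun z : ℝ × ℝ => (z.1 + z.2 / 2, z.1 - z.2 / 2))
      (volume.prod volume) (volume.prod volume) := by
  have shear : MeasurePreserving (fun z : ℝ × ℝ => (z.1, z.1 / 2 + z.2))
      (volume.prod volume) (volume.prod volume) :=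
    (MeasurePreserving.id volume).skew_product (g := fun x y => x / 2 + y)
      ((measurable_fst.div_const 2).add measurable_snd)
      (.of_forall fun _ => map_add_left_eq_self volume _)
  have reflect : MeasurePreserving (fun z : ℝ × ℝ => (z.1, z.1 - z.2))
      (volume.prod volume) (volume.prod volume) :=
    (MeasurePreserving.id volume).skew_product (g := fun x y => x - y)
      (measurable_fst.sub measurable_snd)
      (.of_forall fun _ => Measure.map_sub_left_eq_self volume _)
  have swap :=
    Measure.measurePreserving_swap (μ := (volume : Measure ℝ)) (ν := (volume : Measure ℝ))
  convert reflect.comp (swap.comp (shear.comp swap)) using 1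
  funext z
  simp only [Function.comp, Prod.fst_swap, Prod.snd_swap, Prod.mk.injEq]
  constructor <;> ring

theorem integral_integral_comp_add_half_sub_half {E : Type*} [NormedAddCommGroup E]
    [NormedSpace ℝ E] {f : ℝ × ℝ → E} (hf : Integrable f (volume.prod volume)) :
    ∫ q, ∫ y, f (q + y / 2, q - y / 2) = ∫ z, f z ∂(volume.prod volume) := by
  have hΨ := measurePreserving_add_half_sub_half
  rw [integral_integral (f := fun q y => f (q + y / 2, q - y / 2))
      (hΨ.integrable_comp_of_integrable hf),
    ← integral_map hΨ.aemeasurable (by rw [hΨ.map_eq]; exact hf.aestronglyMeasurable), hΨ.map_eq]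

theorem conj_exp_I_mul_mul (p x : ℝ) :
    (starRingEnd ℂ) (exp (I * p * x)) = exp (-(I * p * x)) := by
  rw [← exp_conj]
  simp

theorem integrable_exp_I_mul_mul {φ : ℝ → ℂ} (hφ : Integrable φ) (p : ℝ) :
    Integrable fun x : ℝ => exp (I * p * x) * φ x :=
  hφ.bdd_mul (c := 1) (by fun_prop) (.of_forall fun x => by
    rw [show I * p * x = ((p * x : ℝ) : ℂ) * I by push_cast; ring, norm_exp_ofReal_mul_I])

theorem integral_integral_exp_mul_mul_conj {φ ψ : ℝ → ℂ} (hφ : Integrable φ)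
    (hψ : Integrable ψ) (p : ℝ) :
    ∫ q : ℝ, ∫ y : ℝ, exp (I * p * y) * φ (q + y / 2) * (starRingEnd ℂ) (ψ (q - y / 2)) =
      (∫ x : ℝ, exp (I * p * x) * φ x) *
        (starRingEnd ℂ) (∫ x : ℝ, exp (I * p * x) * ψ x) := by
  set g := fun x : ℝ => exp (I * p * x) * φ x
  set h := fun x : ℝ => (starRingEnd ℂ) (exp (I * p * x) * ψ x)
  have hh : Integrable h :=
    memLp_one_iff_integrable.1 (memLp_one_iff_integrable.2 (integrable_exp_I_mul_mul hψ p)).star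
  have split (q y : ℝ) : exp (I * p * y) * φ (q + y / 2) * (starRingEnd ℂ) (ψ (q - y / 2)) =
      g (q + y / 2) * h (q - y / 2) := by
    have phase : exp (I * p * y) = exp (I * p * ↑(q + y / 2)) * exp (-(I * p * ↑(q - y / 2))) := by
      rw [← exp_add]; push_cast; ring_nf
    simp only [g, h, map_mul, conj_exp_I_mul_mul, phase]
    ring
  calc _ = ∫ q : ℝ, ∫ y : ℝ, g (q + y / 2) * h (q - y / 2) := by simp only [split]
    _ = ∫ z : ℝ × ℝ, g z.1 * h z.2 ∂(volume.prod volume) :=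
        integral_integral_comp_add_half_sub_half ((integrable_exp_I_mul_mul hφ p).mul_prod hh)
    _ = _ := by rw [integral_prod_mul, integral_conj]

end

theorem statement17_general (φ : SchwartzMap ℝ ℂ) (fW : ℝ → ℝ → ℂ)
    (hfW : ∀ q p : ℝ, fW q p =
      ((2 * Real.pi)⁻¹ : ℂ) * ∫ y : ℝ, Complex.exp (Complex.I * p * y) *
        φ (q + y / 2) * (starRingEnd ℂ) (φ (q - y / 2)))
    (Fφ : ℝ → ℂ)
    (hF : ∀ p : ℝ, Fφ p =
      ((Real.sqrt (2 * Real.pi))⁻¹ : ℂ) * ∫ x : ℝ, Complex.exp (Complex.I * p * x) * φ x)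
    (B : Set ℝ) :
    ∫ p in B, ∫ q : ℝ, fW q p = ∫ p in B, ((‖Fφ p‖ : ℂ)) ^ 2 := by
  have marginal (p : ℝ) : ∫ q : ℝ, fW q p = (‖Fφ p‖ : ℂ) ^ 2 := by
    rw [hF, norm_mul, norm_inv, Complex.norm_real, Real.norm_of_nonneg (Real.sqrt_nonneg _)]
    simp only [hfW, integral_const_mul,
      integral_integral_exp_mul_mul_conj φ.integrable φ.integrable, Complex.mul_conj']
    push_cast
    rw [mul_pow, inv_pow, ← Complex.ofReal_pow √_, Real.sq_sqrt Real.two_pi_pos.le]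
    norm_cast
  simp only [marginal]

/-- For a Schwartz function φ with Wigner function
f^W_φ(q,p) = (2π)⁻¹ ∫ e^{ipy} φ(q+y/2) conj(φ(q-y/2)) dy, the momentum marginal is
∫_ℝ f^W_φ(q,p) dq = |(Fφ)(p)|², where F is the Fourier–Plancherel transform
(with the kernel convention (Fφ)(p) = (2π)^{-1/2} ∫ e^{ipx} φ(x) dx matching the sign
convention of the Wigner function above). Hence ∫_B ∫ f^W_φ dq dp = ∫_B |(Fφ)(p)|² dp
for every Borel B: the Weyl quantization of χ_{ℝ×B} is the spectral projection E^P(B). -/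
theorem statement17 (φ : SchwartzMap ℝ ℂ) (fW : ℝ → ℝ → ℂ)
    (hfW : ∀ q p : ℝ, fW q p =
      ((2 * Real.pi)⁻¹ : ℂ) * ∫ y : ℝ, Complex.exp (Complex.I * p * y) *
        φ (q + y / 2) * (starRingEnd ℂ) (φ (q - y / 2)))
    (Fφ : ℝ → ℂ)
    (hF : ∀ p : ℝ, Fφ p =
      ((Real.sqrt (2 * Real.pi))⁻¹ : ℂ) * ∫ x : ℝ, Complex.exp (Complex.I * p * x) * φ x)
    (B : Set ℝ) (hB : MeasurableSet B) :
    ∫ p in B, ∫ q : ℝ, fW q p = ∫ p in B, ((‖Fφ p‖ : ℂ)) ^ 2 :=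
  statement17_general φ fW hfW Fφ hF B
end

section
/- Let E be a spectral measure (projection-valued POM) on ℝ on a Hilbert space H with compact support. If F is any POM on ℝ such that for all k ∈ ℕ the moment operators satisfy F[k] = E[k] as bounded operators, then F = E. -/
open MeasureTheory ContinuousLinearMap

noncomputable section

/-- A finite measure on `ℝ` whose moments agree with those of a finite measure supported
in a compact interval is equal to it. -/
lemma scalar_determinate (ν σ : Measure ℝ) [IsFiniteMeasure ν] [IsFiniteMeasure σ]
    (R : ℝ) (hR : 0 ≤ R) (hσ : σ (Set.Icc (-R) R)ᶜ = 0)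
    (hintν : ∀ k, Integrable (fun x : ℝ => x ^ k) ν)
    (hintσ : ∀ k, Integrable (fun x : ℝ => x ^ k) σ)
    (hm : ∀ k, ∫ x, x ^ k ∂ν = ∫ x, x ^ k ∂σ) : ν = σ := by
  have haeσ : ∀ᵐ x ∂σ, x ∈ Set.Icc (-R) R := mem_ae_iff.mpr hσ
  set M := (σ Set.univ).toReal with hM
  have hMnn : 0 ≤ M := ENNReal.toReal_nonneg
  -- moment bounds for σ
  have hmomσ : ∀ k : ℕ, ∫ x, x ^ (2 * k) ∂σ ≤ R ^ (2 * k) * M := by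
    intro k
    have h1 : ∫ x, x ^ (2 * k) ∂σ ≤ ∫ _, R ^ (2 * k) ∂σ := by
      refine integral_mono_ae (hintσ _) (integrable_const _) ?_
      filter_upwards [haeσ] with x hx
      calc x ^ (2 * k) = |x| ^ (2 * k) := ((even_two_mul k).pow_abs x).symm
        _ ≤ R ^ (2 * k) := pow_le_pow_left₀ (abs_nonneg x) (abs_le.mpr ⟨hx.1, hx.2⟩) _
    simpa [integral_const, smul_eq_mul, mul_comm, hM, Measure.real] using h1
  -- tail bound for ν
  have htail : ∀ t : ℝ, R < t → ν {x : ℝ | t ≤ |x|} = 0 := by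
    intro t ht
    have ht0 : 0 < t := lt_of_le_of_lt hR ht
    have key : ∀ k : ℕ, (ν {x : ℝ | t ≤ |x|}).toReal * t ^ (2 * k) ≤ R ^ (2 * k) * M := by
      intro k
      have hsub : {x : ℝ | t ≤ |x|} ⊆ {x : ℝ | t ^ (2 * k) ≤ x ^ (2 * k)} := by
        intro x hx
        have h2 : t ^ (2 * k) ≤ |x| ^ (2 * k) := pow_le_pow_left₀ ht0.le hx _
        simpa [(even_two_mul k).pow_abs] using h2
      have hmono := measure_mono (μ := ν) hsub
      have hnn : 0 ≤ᵐ[ν] fun x : ℝ => x ^ (2 * k) :=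
        Filter.Eventually.of_forall fun x => (even_two_mul k).pow_nonneg x
      have hmar := mul_meas_ge_le_integral_of_nonneg hnn (hintν _) (t ^ (2 * k))
      have h2 : t ^ (2 * k) * (ν {x : ℝ | t ≤ |x|}).toReal ≤ ∫ x, x ^ (2 * k) ∂ν := by
        refine le_trans (mul_le_mul_of_nonneg_left ?_ (by positivity)) hmar
        exact ENNReal.toReal_mono (measure_ne_top _ _) hmono
      calc (ν {x : ℝ | t ≤ |x|}).toReal * t ^ (2 * k)
          = t ^ (2 * k) * (ν {x : ℝ | t ≤ |x|}).toReal := mul_comm _ _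
        _ ≤ ∫ x, x ^ (2 * k) ∂ν := h2
        _ = ∫ x, x ^ (2 * k) ∂σ := hm _
        _ ≤ R ^ (2 * k) * M := hmomσ k
    set c := (ν {x : ℝ | t ≤ |x|}).toReal with hc
    have hcle : ∀ k : ℕ, c ≤ M * ((R / t) ^ 2) ^ k := by
      intro k
      have h1 : c ≤ (R ^ (2 * k) * M) / t ^ (2 * k) :=
        (le_div_iff₀ (by positivity)).mpr (key k)
      have h2 : (R ^ (2 * k) * M) / t ^ (2 * k) = M * ((R / t) ^ 2) ^ k := by
        rw [← pow_mul, div_pow]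
        ring
      linarith [h1, h2.ge, h2.le]
    have hq1 : (R / t) ^ 2 < 1 := by
      have : R / t < 1 := (div_lt_one ht0).mpr ht
      exact pow_lt_one₀ (by positivity) this (by norm_num)
    have hlim : Filter.Tendsto (fun k : ℕ => M * ((R / t) ^ 2) ^ k)
        Filter.atTop (nhds (M * 0)) :=
      Filter.Tendsto.const_mul M
        (tendsto_pow_atTop_nhds_zero_of_lt_one (by positivity) hq1)
    have hc0 : c ≤ 0 := by
      have := ge_of_tendsto hlim (Filter.Eventually.of_forall hcle)
      simpa using this
    have hceq : c = 0 := le_antisymm hc0 ENNReal.toReal_nonneg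
    rcases (ENNReal.toReal_eq_zero_iff _).mp hceq with h | h
    · exact h
    · exact absurd h (measure_ne_top _ _)
  -- ν is also supported in the interval
  have hνc : ν (Set.Icc (-R) R)ᶜ = 0 := by
    have hcover : (Set.Icc (-R) R)ᶜ ⊆ ⋃ n : ℕ, {x : ℝ | R + 1 / (n + 1) ≤ |x|} := by
      intro x hx
      have hx' : R < |x| := by
        have hx2 : ¬ (x ∈ Set.Icc (-R) R) := hx
        rw [Set.mem_Icc] at hx2
        rcases not_and_or.mp hx2 with h | h
        · exact lt_abs.mpr (Or.inr (by linarith [not_le.mp h]))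
        · exact lt_abs.mpr (Or.inl (not_le.mp h))
      obtain ⟨n, hn⟩ := exists_nat_one_div_lt (sub_pos.mpr hx')
      exact Set.mem_iUnion.mpr ⟨n, by simp only [Set.mem_setOf_eq]; push_cast; linarith⟩
    refine measure_mono_null hcover (measure_iUnion_null fun n => htail _ ?_)
    have : (0:ℝ) < 1 / (n + 1) := by positivity
    linarith
  have haeν : ∀ᵐ x ∂ν, x ∈ Set.Icc (-R) R := mem_ae_iff.mpr hνc
  -- equal integrals for polynomials
  have hpoly : ∀ p : Polynomial ℝ, ∫ x, p.eval x ∂ν = ∫ x, p.eval x ∂σ := by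
    intro p
    have h1 : ∀ (μ : Measure ℝ), (∀ k, Integrable (fun x : ℝ => x ^ k) μ) →
        ∫ x, p.eval x ∂μ
          = ∑ i ∈ Finset.range (p.natDegree + 1), p.coeff i * ∫ x, x ^ i ∂μ := by
      intro μ hint
      calc ∫ x, p.eval x ∂μ
          = ∫ x, ∑ i ∈ Finset.range (p.natDegree + 1), p.coeff i * x ^ i ∂μ := by
            simp_rw [← Polynomial.eval_eq_sum_range]
        _ = ∑ i ∈ Finset.range (p.natDegree + 1), ∫ x, p.coeff i * x ^ i ∂μ :=
            integral_finset_sum _ fun i _ => (hint i).const_mul _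
        _ = _ := by simp_rw [integral_const_mul]
    rw [h1 ν hintν, h1 σ hintσ]
    exact Finset.sum_congr rfl fun i _ => by rw [hm i]
  have hPint : ∀ (p : Polynomial ℝ) (μ : Measure ℝ),
      (∀ k, Integrable (fun x : ℝ => x ^ k) μ) → Integrable (fun x => p.eval x) μ := by
    intro p μ hint
    have h : (fun x : ℝ => p.eval x)
        = fun x => ∑ i ∈ Finset.range (p.natDegree + 1), p.coeff i * x ^ i := by
      funext x; exact Polynomial.eval_eq_sum_range _
    rw [h]
    exact integrable_finset_sum _ fun i _ => (hint i).const_mul _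
  -- equal integrals for continuous functions
  have hcont : ∀ f : ℝ → ℝ, Continuous f → ∫ x, f x ∂ν = ∫ x, f x ∂σ := by
    intro f hf
    obtain ⟨Mf, hMf⟩ :=
      (isCompact_Icc : IsCompact (Set.Icc (-R) R)).exists_bound_of_continuousOn
        hf.continuousOn
    have hfint : ∀ (μ : Measure ℝ) [IsFiniteMeasure μ],
        (∀ᵐ x ∂μ, x ∈ Set.Icc (-R) R) → Integrable f μ := by
      intro μ _ hae
      refine (integrable_const Mf).mono' hf.aestronglyMeasurable ?_
      filter_upwards [hae] with x hx using hMf x hx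
    have hfν := hfint ν haeν
    have hfσ := hfint σ haeσ
    set D := ∫ x, f x ∂ν - ∫ x, f x ∂σ with hD
    set cmass := (ν Set.univ).toReal + (σ Set.univ).toReal with hcmass
    have hcm : 0 ≤ cmass := by positivity
    have key : ∀ ε : ℝ, 0 < ε → |D| ≤ ε * cmass := by
      intro ε hε
      obtain ⟨p, hp⟩ :=
        exists_polynomial_near_of_continuousOn (-R) R f hf.continuousOn ε hε
      have hb : ∀ (μ : Measure ℝ) [IsFiniteMeasure μ],
          (∀ᵐ x ∂μ, x ∈ Set.Icc (-R) R) →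
          ‖∫ x, (f x - p.eval x) ∂μ‖ ≤ ε * (μ Set.univ).toReal := by
        intro μ _ hae
        refine norm_integral_le_of_norm_le_const ?_
        filter_upwards [hae] with x hx
        rw [Real.norm_eq_abs, abs_sub_comm]
        exact (hp x hx).le
      have e1 : ∫ x, (f x - p.eval x) ∂ν = (∫ x, f x ∂ν) - ∫ x, p.eval x ∂ν :=
        integral_sub hfν (hPint p ν hintν)
      have e2 : ∫ x, (f x - p.eval x) ∂σ = (∫ x, f x ∂σ) - ∫ x, p.eval x ∂σ :=
        integral_sub hfσ (hPint p σ hintσ)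
      calc |D| = |(∫ x, (f x - p.eval x) ∂ν) - ∫ x, (f x - p.eval x) ∂σ| := by
            rw [e1, e2, hpoly p, hD]; ring_nf
        _ ≤ |∫ x, (f x - p.eval x) ∂ν| + |∫ x, (f x - p.eval x) ∂σ| := abs_sub _ _
        _ ≤ ε * (ν Set.univ).toReal + ε * (σ Set.univ).toReal :=
            add_le_add (hb ν haeν) (hb σ haeσ)
        _ = ε * cmass := by rw [hcmass]; ring
    by_contra hne
    have h0 : 0 < |D| := abs_pos.mpr (sub_ne_zero.mpr hne)
    have h1 := key (|D| / (2 * (cmass + 1))) (by positivity)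
    rw [div_mul_eq_mul_div, le_div_iff₀ (by positivity)] at h1
    nlinarith
  -- equality on Iic
  have hIic : ∀ t : ℝ, ν (Set.Iic t) = σ (Set.Iic t) := by
    intro t
    set f : ℕ → ℝ → ℝ := fun n x => max 0 (min 1 (1 - (n + 1 : ℝ) * (x - t))) with hfdef
    have hfc : ∀ n, Continuous (f n) := fun n => by
      apply continuous_const.max
      apply continuous_const.min
      fun_prop
    have hfb : ∀ n x, ‖f n x‖ ≤ 1 := by
      intro n x
      rw [Real.norm_eq_abs, abs_of_nonneg (le_max_left _ _)]
      exact max_le (by norm_num) (min_le_left _ _)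
    have hlim : ∀ x : ℝ, Filter.Tendsto (fun n => f n x) Filter.atTop
        (nhds ((Set.Iic t).indicator (fun _ => (1 : ℝ)) x)) := by
      intro x
      rcases le_or_gt x t with hx | hx
      · have hfx : ∀ n, f n x = 1 := by
          intro n
          have h1 : (n + 1 : ℝ) * (x - t) ≤ 0 :=
            mul_nonpos_of_nonneg_of_nonpos (by positivity) (sub_nonpos.mpr hx)
          have h2 : (1 : ℝ) ≤ 1 - (n + 1 : ℝ) * (x - t) := by linarith
          simp [hfdef, min_eq_left h2]
        rw [Set.indicator_of_mem (show x ∈ Set.Iic t from hx)]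
        simpa [hfx] using (tendsto_const_nhds : Filter.Tendsto (fun _ : ℕ => (1:ℝ)) _ _)
      · rw [Set.indicator_of_notMem (by simpa using hx.not_ge)]
        have hev : ∀ᶠ n in Filter.atTop, f n x = 0 := by
          filter_upwards [Filter.eventually_ge_atTop ⌈1 / (x - t)⌉₊] with n hn
          have hxt : 0 < x - t := sub_pos.mpr hx
          have h1 : 1 / (x - t) ≤ (n : ℝ) :=
            le_trans (Nat.le_ceil _) (by exact_mod_cast hn)
          have h2 : 1 ≤ (n : ℝ) * (x - t) := by
            rw [div_le_iff₀ hxt] at h1; linarith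
          have h3 : (1 : ℝ) ≤ (n + 1 : ℝ) * (x - t) := by nlinarith
          have h4 : min 1 (1 - (n + 1 : ℝ) * (x - t)) ≤ 0 :=
            le_trans (min_le_right _ _) (by linarith)
          simp [hfdef, max_eq_left h4]
        exact Filter.Tendsto.congr' (hev.mono fun n h => h.symm) tendsto_const_nhds
    have hconv : ∀ (μ : Measure ℝ) [IsFiniteMeasure μ],
        Filter.Tendsto (fun n => ∫ x, f n x ∂μ) Filter.atTop
          (nhds ((μ (Set.Iic t)).toReal)) := by
      intro μ _
      have h := tendsto_integral_of_dominated_convergence (μ := μ)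
        (F := fun n x => f n x) (f := (Set.Iic t).indicator fun _ => (1:ℝ))
        (fun _ => (1 : ℝ))
        (fun n => (hfc n).aestronglyMeasurable) (integrable_const 1)
        (fun n => Filter.Eventually.of_forall (hfb n))
        (Filter.Eventually.of_forall hlim)
      have hind : ∫ x, (Set.Iic t).indicator (fun _ => (1:ℝ)) x ∂μ
          = (μ (Set.Iic t)).toReal := by
        rw [integral_indicator_const (1:ℝ) measurableSet_Iic]
        simp [Measure.real]
      rwa [hind] at h
    have h1 := hconv ν
    have h2 := (hconv σ).congr fun n => (hcont (f n) (hfc n)).symm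
    have h3 : (ν (Set.Iic t)).toReal = (σ (Set.Iic t)).toReal :=
      tendsto_nhds_unique h1 h2
    exact (ENNReal.toReal_eq_toReal_iff' (measure_ne_top _ _) (measure_ne_top _ _)).mp h3
  exact MeasureTheory.Measure.ext_of_Iic ν σ hIic

/-- A projection-valued POM E with compact support is determinate: if a POM F
has the same moment operators as E (equivalently, for every φ the scalar measures
F_{φ,φ} and E_{φ,φ} have the same moments), then F = E. -/
theorem statement18 {H : Type*} [NormedAddCommGroup H] [InnerProductSpace ℂ H]
    [CompleteSpace H] (E F : POM ℝ H)
    (hproj : ∀ B : Set ℝ, MeasurableSet B → IsIdempotentElem (E.toFun B))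
    (K : Set ℝ) (hKc : IsCompact K) (hK : E.toFun K = 1)
    (μE μF : H → Measure ℝ)
    (hfinE : ∀ φ, IsFiniteMeasure (μE φ)) (hfinF : ∀ φ, IsFiniteMeasure (μF φ))
    (hμE : ∀ (φ : H) (B : Set ℝ), MeasurableSet B →
      ((μE φ) B).toReal = (inner ℂ φ (E.toFun B φ) : ℂ).re)
    (hμF : ∀ (φ : H) (B : Set ℝ), MeasurableSet B →
      ((μF φ) B).toReal = (inner ℂ φ (F.toFun B φ) : ℂ).re)
    (hintE : ∀ (φ : H) (k : ℕ), Integrable (fun x : ℝ => x ^ k) (μE φ))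
    (hintF : ∀ (φ : H) (k : ℕ), Integrable (fun x : ℝ => x ^ k) (μF φ))
    (hmom : ∀ (φ : H) (k : ℕ), ∫ x, x ^ k ∂(μF φ) = ∫ x, x ^ k ∂(μE φ)) :
    ∀ B : Set ℝ, MeasurableSet B → F.toFun B = E.toFun B := by
  intro B hB
  -- a compact interval containing K
  obtain ⟨r, hr⟩ := hKc.isBounded.subset_closedBall 0
  set R := max r 0 with hRdef
  have hR0 : 0 ≤ R := le_max_right _ _
  have hKR : K ⊆ Set.Icc (-R) R := by
    intro x hx
    have h := hr hx
    rw [Real.closedBall_eq_Icc] at h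
    have h1 : -r ≤ x := by simpa using h.1
    have h2 : x ≤ r := by simpa using h.2
    constructor
    · have : r ≤ R := le_max_left _ _
      linarith
    · exact le_trans h2 (le_max_left _ _)
  -- E of the empty set is weakly zero
  have hEempty : ∀ ψ φ : H, (inner ℂ ψ (E.toFun ∅ φ) : ℂ) = 0 := by
    intro ψ φ
    have h := E.weakly_additive (fun _ => ∅) (fun _ => MeasurableSet.empty)
      (fun i j hij => by simp [Function.onFun]) ψ φ
    have h2 : (⋃ _ : ℕ, (∅ : Set ℝ)) = (∅ : Set ℝ) := by simp
    rw [h2] at h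
    have h3 := h.summable.tendsto_atTop_zero
    exact tendsto_nhds_unique tendsto_const_nhds h3
  -- E of Kᶜ is weakly zero
  have hEcompl : ∀ φ : H, (inner ℂ φ (E.toFun Kᶜ φ) : ℂ) = 0 := by
    intro φ
    set f : ℕ → Set ℝ := fun n => if n = 0 then K else if n = 1 then Kᶜ else ∅ with hfdef
    have hmeas : ∀ n, MeasurableSet (f n) := by
      intro n
      rcases n with _ | _ | n
      · simpa [hfdef] using hKc.measurableSet
      · simpa [hfdef] using hKc.measurableSet.compl
      · simp [hfdef]
    have hdis : Pairwise (Function.onFun Disjoint f) := by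
      intro i j hij
      rcases i with _ | _ | i <;> rcases j with _ | _ | j <;>
        simp only [Function.onFun, hfdef] <;>
        first
          | exact absurd rfl hij
          | simpa using disjoint_compl_right
          | simpa using disjoint_compl_left
          | simp [Nat.succ_ne_zero]
    have hU : (⋃ n, f n) = Set.univ := by
      apply Set.eq_univ_of_forall
      intro x
      by_cases hx : x ∈ K
      · exact Set.mem_iUnion.mpr ⟨0, by simp [hfdef, hx]⟩
      · exact Set.mem_iUnion.mpr ⟨1, by simp [hfdef, hx]⟩
    have h := E.weakly_additive f hmeas hdis φ φ
    rw [hU] at h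
    have h2 : HasSum (fun n => (inner ℂ φ (E.toFun (f n) φ) : ℂ))
        ((inner ℂ φ (E.toFun K φ) : ℂ) + inner ℂ φ (E.toFun Kᶜ φ)) := by
      have h3 := hasSum_sum_of_ne_finset_zero (s := ({0, 1} : Finset ℕ))
        (f := fun n => (inner ℂ φ (E.toFun (f n) φ) : ℂ)) (L := SummationFilter.unconditional ℕ) ?_
      · simpa [hfdef] using h3
      · intro n hn
        rcases n with _ | _ | n
        · simp at hn
        · simp at hn
        · simpa [hfdef] using hEempty φ φ
    have h3 := h.unique h2
    rw [hK, E.normalized] at h3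
    exact (left_eq_add.mp h3)
  -- the scalar measures agree
  have hmeq : ∀ φ : H, μF φ = μE φ := by
    intro φ
    haveI := hfinE φ; haveI := hfinF φ
    have hK0 : (μE φ) Kᶜ = 0 := by
      have h1 := hμE φ Kᶜ hKc.measurableSet.compl
      rw [hEcompl φ] at h1
      simp only [Complex.zero_re] at h1
      rcases (ENNReal.toReal_eq_zero_iff _).mp h1 with h | h
      · exact h
      · exact absurd h (measure_ne_top _ _)
    have hσc : (μE φ) (Set.Icc (-R) R)ᶜ = 0 :=
      measure_mono_null (Set.compl_subset_compl.mpr hKR) hK0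
    exact scalar_determinate (μF φ) (μE φ) R hR0 hσc (hintF φ) (hintE φ) (hmom φ)
  -- self-adjoint operators have real diagonal matrix elements
  have hreal : ∀ (T : H →L[ℂ] H), IsSelfAdjoint T → ∀ φ : H,
      (inner ℂ φ (T φ) : ℂ).im = 0 := by
    intro T hT φ
    have hadj : ContinuousLinearMap.adjoint T = T := isSelfAdjoint_iff'.mp hT
    have h1 : (inner ℂ (T φ) φ : ℂ) = inner ℂ φ (T φ) := by
      conv_lhs => rw [← hadj]
      exact ContinuousLinearMap.adjoint_inner_left T φ φ
    have h2 : (starRingEnd ℂ) (inner ℂ φ (T φ) : ℂ) = inner ℂ φ (T φ) := by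
      rw [inner_conj_symm]
      exact h1
    exact Complex.conj_eq_iff_im.mp h2
  -- diagonal matrix elements agree
  have hdiag : ∀ φ : H, (inner ℂ φ (F.toFun B φ) : ℂ) = inner ℂ φ (E.toFun B φ) := by
    intro φ
    haveI := hfinE φ; haveI := hfinF φ
    have hre : (inner ℂ φ (F.toFun B φ) : ℂ).re = (inner ℂ φ (E.toFun B φ) : ℂ).re := by
      rw [← hμF φ B hB, ← hμE φ B hB, hmeq φ]
    have him1 := hreal _ (F.pos B).isSelfAdjoint φ
    have him2 := hreal _ (E.pos B).isSelfAdjoint φ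
    exact Complex.ext hre (by rw [him1, him2])
  -- conclude equality of operators
  have hzero : ∀ φ : H, (inner ℂ ((F.toFun B - E.toFun B) φ) φ : ℂ) = 0 := by
    intro φ
    have h1 : (inner ℂ φ ((F.toFun B - E.toFun B) φ) : ℂ) = 0 := by
      rw [ContinuousLinearMap.sub_apply, inner_sub_right, hdiag φ, sub_self]
    have h2 : (inner ℂ ((F.toFun B - E.toFun B) φ) φ : ℂ)
        = (starRingEnd ℂ) (inner ℂ φ ((F.toFun B - E.toFun B) φ) : ℂ) :=
      (inner_conj_symm _ _).symm
    rw [h2, h1, map_zero]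
  have hlin : ((F.toFun B - E.toFun B : H →L[ℂ] H) : H →ₗ[ℂ] H) = 0 :=
    (inner_map_self_eq_zero _).mp fun x => hzero x
  have : F.toFun B - E.toFun B = 0 := by
    ext x
    have := congrArg (fun (g : H →ₗ[ℂ] H) => g x) hlin
    simpa using this
  exact sub_eq_zero.mp this
end
end
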